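/- If Y is a uniformly random permutation of the multiset with d copies of each element of [n], d ≥ 2, then the probability that a fixed edge of Y contains at least two distinct vertices each of multiplicity at least 2 is at most k^4 * n^2 * ((d)_2)^2 / (nd)_4. -/

import Mathlib

/-!
Permuting positions preserves the set of sequences, so for fixed colours `v, w` the number of
sequences showing the pattern `v, v, w, w` at four distinct positions does not depend on the
positions. Summing over all `(nd)_4` position tuples counts each sequence at most `((d)_2)^2`
times, so each pattern occurs in at most a `((d)_2)^2 / (nd)_4` fraction of the sequences. An
edge with two repeated vertices shows such a pattern at one of at most `k^4` position tuples
inside it, for one of `n^2` colour pairs; the union bound finishes the proof.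
-/

/-- The set of permutations of the multiset consisting of `d` copies of each element of
`Fin n`, encoded as sequences of length `n*d` (functions `Fin (n*d) → Fin n`) in which
every symbol occurs exactly `d` times. -/
def permSet (n d : ℕ) : Finset (Fin (n * d) → Fin n) :=
  Finset.univ.filter (fun y => ∀ v, (Finset.univ.filter (fun i => y i = v)).card = d)

/-- The `i`-th edge of the sequence `y`: the multiset of its entries in positions
`k*i+1, …, k*i+k` (0-indexed: `k*i, …, k*i+k-1`); positions out of range contribute
nothing (which never happens for `i < m` when `n*d = k*m`). -/
def edgeOf {n d : ℕ} (k : ℕ) (y : Fin (n * d) → Fin n) (i : ℕ) : Multiset (Fin n) :=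
  (Finset.range k).val.filterMap
    (fun j => if h : k * i + j < n * d then some (y ⟨k * i + j, h⟩) else none)

/-- A multiset (edge) is a *simple loop* if exactly one vertex has multiplicity 2 and
no vertex has multiplicity greater than 2 (so all other vertices are distinct, of
multiplicity 1). -/
def isSimpleLoop {n : ℕ} (e : Multiset (Fin n)) : Prop :=
  (Finset.univ.filter (fun v => e.count v = 2)).card = 1 ∧ ∀ v, e.count v ≤ 2

instance {n : ℕ} : DecidablePred (isSimpleLoop (n := n)) := fun _ => by
  unfold isSimpleLoop; infer_instance

/-- The number of edges of `y` (among its `n*d/k` consecutive `k`-blocks) that are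
simple loops. -/
def numSimpleLoops {n d : ℕ} (k : ℕ) (y : Fin (n * d) → Fin n) : ℕ :=
  ((Finset.range (n * d / k)).filter (fun i => isSimpleLoop (edgeOf k y i))).card


open Finset

section PatternCounting

variable {ι κ α : Type*} [DecidableEq α]

lemma card_filter_comp_embedding_eq [Fintype κ] (S : Finset (ι → α))
    (hS : ∀ σ : Equiv.Perm ι, ∀ y ∈ S, y ∘ σ ∈ S) (p q : κ ↪ ι) (c : κ → α) :
    #{y ∈ S | y ∘ p = c} = #{y ∈ S | y ∘ q = c} := by
  obtain ⟨σ, hσ⟩ := Equiv.Perm.exists_extending_pair p q p.injective q.injective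
  have hσ' : ∀ a, σ.symm (q a) = p a := fun a => by rw [← hσ, Equiv.symm_apply_apply]
  refine card_bij' (fun y _ => y ∘ σ.symm) (fun y _ => y ∘ σ) ?_ ?_ ?_ ?_
  · intro y hy
    simp only [mem_filter] at hy ⊢
    refine ⟨hS _ y hy.1, funext fun a => ?_⟩
    simpa [hσ'] using congrFun hy.2 a
  · intro y hy
    simp only [mem_filter] at hy ⊢
    refine ⟨hS _ y hy.1, funext fun a => ?_⟩
    simpa [hσ] using congrFun hy.2 a
  · intro y _; funext x; simp
  · intro y _; funext x; simp

lemma card_filter_comp_embedding_mul_card_le [Fintype ι] [DecidableEq ι] [Fintype κ]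
    [DecidableEq κ] (S : Finset (ι → α))
    (hS : ∀ σ : Equiv.Perm ι, ∀ y ∈ S, y ∘ σ ∈ S) (p : κ ↪ ι) (c : κ → α) {B : ℕ}
    (hB : ∀ y ∈ S, #{e : κ ↪ ι | y ∘ e = c} ≤ B) :
    #{y ∈ S | y ∘ p = c} * Fintype.card (κ ↪ ι) ≤ B * #S :=
  calc #{y ∈ S | y ∘ p = c} * Fintype.card (κ ↪ ι)
      = ∑ e : κ ↪ ι, #{y ∈ S | y ∘ e = c} := by
        rw [sum_congr rfl fun e _ => card_filter_comp_embedding_eq S hS e p c, sum_const,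
          card_univ, smul_eq_mul, mul_comm]
    _ = ∑ y ∈ S, #{e : κ ↪ ι | y ∘ e = c} := by
        simp only [card_filter]
        exact sum_comm
    _ ≤ ∑ _y ∈ S, B := sum_le_sum hB
    _ = B * #S := by rw [sum_const, smul_eq_mul, mul_comm]

lemma card_embedding_comp_eq_le [Fintype ι] {d : ℕ} (y : ι → α) {v w : α}
    (hv : #{i | y i = v} = d) (hw : #{i | y i = w} = d) :
    #{e : Fin 4 ↪ ι | y ∘ e = ![v, v, w, w]} ≤ d.descFactorial 2 ^ 2 := by
  have hd : d.descFactorial 2 = d * d - d := by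
    rw [Nat.descFactorial_succ, Nat.descFactorial_one]
    cases d <;> simp [Nat.succ_mul, Nat.mul_succ]
  calc #{e : Fin 4 ↪ ι | y ∘ e = ![v, v, w, w]}
      ≤ #(({i | y i = v} : Finset ι).offDiag ×ˢ ({i | y i = w} : Finset ι).offDiag) := by
        refine card_le_card_of_injOn (fun e => ((e 0, e 1), (e 2, e 3))) ?_ ?_
        · intro e he
          have h := fun a => congrFun (mem_filter.1 he).2 a
          simp only [coe_product, coe_offDiag, coe_filter, mem_univ, true_and, Set.mem_prod,
            Set.mem_offDiag, Set.mem_ofPred_eq]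
          refine ⟨⟨?_, ?_, e.injective.ne (by decide)⟩, ?_, ?_, e.injective.ne (by decide)⟩
          · simpa using h 0
          · simpa using h 1
          · simpa using h 2
          · simpa using h 3
        · intro e _ e' _ hee'
          simp only [Prod.mk.injEq] at hee'
          ext j
          fin_cases j <;> simp [hee']
    _ = d.descFactorial 2 ^ 2 := by rw [card_product, offDiag_card, offDiag_card, hv, hw, hd, sq]

lemma exists_embedding_comp_eq_of_two_le_card {β : Type*} [Fintype β] (f : β → α) {v w : α}
    (hvw : v ≠ w) (hv : 2 ≤ #{j | f j = v}) (hw : 2 ≤ #{j | f j = w}) :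
    ∃ e : Fin 4 ↪ β, f ∘ e = ![v, v, w, w] := by
  obtain ⟨j₁, hj₁, j₂, hj₂, h₁₂⟩ := one_lt_card.1 hv
  obtain ⟨j₃, hj₃, j₄, hj₄, h₃₄⟩ := one_lt_card.1 hw
  simp only [mem_filter, mem_univ, true_and] at hj₁ hj₂ hj₃ hj₄
  have hf : f ∘ ![j₁, j₂, j₃, j₄] = ![v, v, w, w] := by
    ext a; fin_cases a <;> simp [hj₁, hj₂, hj₃, hj₄]
  refine ⟨⟨![j₁, j₂, j₃, j₄], fun a b hab => ?_⟩, hf⟩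
  have hfab := congrArg f hab
  fin_cases a <;> fin_cases b <;> simp_all [eq_comm]

end PatternCounting

lemma comp_perm_mem_permSet {n d : ℕ} (σ : Equiv.Perm (Fin (n * d))) {y : Fin (n * d) → Fin n}
    (hy : y ∈ permSet n d) : y ∘ σ ∈ permSet n d := by
  simp only [permSet, mem_filter, mem_univ, true_and] at hy ⊢
  exact fun v => (card_equiv σ (by simp)).trans (hy v)

lemma card_filter_permSet_comp_mul_descFactorial_le {n d : ℕ} (p : Fin 4 ↪ Fin (n * d))
    (v w : Fin n) :
    #{y ∈ permSet n d | y ∘ p = ![v, v, w, w]} * (n * d).descFactorial 4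
      ≤ d.descFactorial 2 ^ 2 * #(permSet n d) := by
  have h := card_filter_comp_embedding_mul_card_le (permSet n d) comp_perm_mem_permSet p
    ![v, v, w, w] fun y hy => card_embedding_comp_eq_le y ((mem_filter.1 hy).2 v)
      ((mem_filter.1 hy).2 w)
  rwa [Fintype.card_embedding_eq, Fintype.card_fin, Fintype.card_fin] at h

section Edges

variable {n d k m i : ℕ}

def edgePos (hm : n * d = k * m) (hi : i < m) : Fin k ↪ Fin (n * d) where
  toFun j := ⟨k * i + j, by nlinarith [j.2]⟩
  inj' j j' h := by
    simp only [Fin.mk.injEq, add_right_inj] at h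
    exact Fin.ext h

lemma count_edgeOf (hm : n * d = k * m) (hi : i < m) (y : Fin (n * d) → Fin n) (v : Fin n) :
    (edgeOf k y i).count v = #{j | y (edgePos hm hi j) = v} := by
  have hrange : (range k).val = (univ : Finset (Fin k)).val.map Fin.val := by
    rw [← Nat.Iio_eq_range, ← Fin.map_valEmbedding_univ, map_val]
    rfl
  have hsome : (fun j => if h : k * i + j < n * d then some (y ⟨k * i + j, h⟩) else none) ∘ Fin.val
      = some ∘ fun j : Fin k => y (edgePos hm hi j) := by
    funext j
    exact dif_pos (edgePos hm hi j).2
  rw [edgeOf, hrange, Multiset.filterMap_map, hsome, Multiset.filterMap_eq_map,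
    Multiset.count_map, card_def, filter_val]
  simp only [eq_comm]

lemma exists_embedding_comp_edgePos_eq (hm : n * d = k * m) (hi : i < m)
    {y : Fin (n * d) → Fin n} {v w : Fin n} (hvw : v ≠ w)
    (hv : 2 ≤ (edgeOf k y i).count v) (hw : 2 ≤ (edgeOf k y i).count w) :
    ∃ e : Fin 4 ↪ Fin k, y ∘ e.trans (edgePos hm hi) = ![v, v, w, w] := by
  rw [count_edgeOf hm hi] at hv hw
  exact exists_embedding_comp_eq_of_two_le_card _ hvw hv hw

end Edges

lemma card_filter_two_repeated_mul_descFactorial_le {n d k m i : ℕ} (hm : n * d = k * m)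
    (hi : i < m) :
    #{y ∈ permSet n d | ∃ v w, v ≠ w ∧
        2 ≤ (edgeOf k y i).count v ∧ 2 ≤ (edgeOf k y i).count w} * (n * d).descFactorial 4
      ≤ k ^ 4 * n ^ 2 * d.descFactorial 2 ^ 2 * #(permSet n d) := by
  set A : Fin n × Fin n × (Fin 4 ↪ Fin k) → Finset (Fin (n * d) → Fin n) := fun q =>
    {y ∈ permSet n d | y ∘ q.2.2.trans (edgePos hm hi) = ![q.1, q.1, q.2.1, q.2.1]}
  have hcover : {y ∈ permSet n d | ∃ v w, v ≠ w ∧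
      2 ≤ (edgeOf k y i).count v ∧ 2 ≤ (edgeOf k y i).count w} ⊆ univ.biUnion A := by
    intro y hy
    obtain ⟨hy, v, w, hvw, hv, hw⟩ := mem_filter.1 hy
    obtain ⟨e, he⟩ := exists_embedding_comp_edgePos_eq hm hi hvw hv hw
    exact mem_biUnion.2 ⟨(v, w, e), mem_univ _, mem_filter.2 ⟨hy, he⟩⟩
  have hcard : Fintype.card (Fin n × Fin n × (Fin 4 ↪ Fin k)) ≤ k ^ 4 * n ^ 2 := by
    simp only [Fintype.card_prod, Fintype.card_embedding_eq, Fintype.card_fin]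
    nlinarith [Nat.descFactorial_le_pow k 4]
  calc _ ≤ (∑ q, #(A q)) * (n * d).descFactorial 4 :=
        Nat.mul_le_mul_right _ ((card_le_card hcover).trans card_biUnion_le)
    _ = ∑ q, #(A q) * (n * d).descFactorial 4 := sum_mul _ _ _
    _ ≤ ∑ _q : Fin n × Fin n × (Fin 4 ↪ Fin k), d.descFactorial 2 ^ 2 * #(permSet n d) :=
        sum_le_sum fun q _ => card_filter_permSet_comp_mul_descFactorial_le _ _ _
    _ ≤ k ^ 4 * n ^ 2 * d.descFactorial 2 ^ 2 * #(permSet n d) := by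
        rw [sum_const, card_univ, smul_eq_mul, mul_assoc (k ^ 4 * n ^ 2)]
        exact Nat.mul_le_mul_right _ hcard

theorem stmt4_general (n d k m : ℕ) (hm : n * d = k * m)
    (i : ℕ) (hi : i < m) :
    (((permSet n d).filter (fun y => ∃ v w, v ≠ w ∧
        2 ≤ (edgeOf k y i).count v ∧ 2 ≤ (edgeOf k y i).count w)).card : ℝ)
        / ((permSet n d).card : ℝ)
      ≤ (k : ℝ) ^ 4 * (n : ℝ) ^ 2 * (d.descFactorial 2 : ℝ) ^ 2
        / ((n * d).descFactorial 4 : ℝ) := by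
  rcases ((permSet n d).filter (fun y => ∃ v w, v ≠ w ∧
      2 ≤ (edgeOf k y i).count v ∧ 2 ≤ (edgeOf k y i).count w)).eq_empty_or_nonempty
    with hempty | ⟨y, hy⟩
  · rw [hempty, card_empty, Nat.cast_zero, zero_div]
    positivity
  obtain ⟨hy, v, w, hvw, hv, hw⟩ := mem_filter.1 hy
  have hperm : 0 < #(permSet n d) := card_pos.2 ⟨y, hy⟩
  have hfour : 0 < (n * d).descFactorial 4 := by
    obtain ⟨e, -⟩ := exists_embedding_comp_edgePos_eq hm hi hvw hv hw
    have := Fintype.card_pos_iff.2 ⟨e.trans (edgePos hm hi)⟩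
    rwa [Fintype.card_embedding_eq, Fintype.card_fin, Fintype.card_fin] at this
  rw [div_le_div_iff₀ (by exact_mod_cast hperm) (by exact_mod_cast hfour)]
  exact_mod_cast card_filter_two_repeated_mul_descFactorial_le hm hi

/-- For a uniformly random permutation `Y` of the multiset with `d` copies of each element
of `[n]` (`d ≥ 2`), the probability that a fixed edge of `Y` contains at least two distinct
vertices, each of multiplicity at least 2, is at most `k^4 * n^2 * ((d)_2)^2 / (nd)_4`. -/
theorem stmt4 (n d k m : ℕ) (hk : 2 ≤ k) (hn : 1 ≤ n) (hd : 2 ≤ d) (hm : n * d = k * m)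
    (i : ℕ) (hi : i < m) :
    (((permSet n d).filter (fun y => ∃ v w, v ≠ w ∧
        2 ≤ (edgeOf k y i).count v ∧ 2 ≤ (edgeOf k y i).count w)).card : ℝ)
        / ((permSet n d).card : ℝ)
      ≤ (k : ℝ) ^ 4 * (n : ℝ) ^ 2 * (d.descFactorial 2 : ℝ) ^ 2
        / ((n * d).descFactorial 4 : ℝ) :=
  stmt4_general n d k m hm i hi
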